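/- arXiv:0903.4954 — 2 statements merged into one kernel-verified Lean document; each statement's English description precedes it below -/
import Mathlib

section
/- Let the setup of the weighted bootstrap hold, and let {B_n*(y) : 0 ≤ y ≤ 1} be the sequence of Brownian bridges furnished by the KMT-type approximation theorem for the weighted bootstrapped empirical process. Then sup_{−∞<t<∞} |α_n*(t) − B_n*(F(t))| = O_P( (log n) / n^{1/2} ) as n → ∞; that is, for every δ > 0 there exist a constant C and an integer N such that for all n ≥ N, P( sup_{−∞<t<∞} |α_n*(t) − B_n*(F(t))| > C (log n)/n^{1/2} ) ≤ δ. -/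
open MeasureTheory ProbabilityTheory Real

noncomputable section

/-- A sequence of real random variables is i.i.d.: measurable, independent,
all with the law of the first one. -/
def IsIIDSeq {Ω : Type*} [MeasurableSpace Ω] (P : Measure Ω) (X : ℕ → Ω → ℝ) : Prop :=
  (∀ i, Measurable (X i)) ∧
    iIndepFun X P ∧
    ∀ i, Measure.map (X i) P = Measure.map (X 0) P

/-- A Brownian bridge on `[0,1]`: a measurable, almost surely continuous, centered
Gaussian process with covariance `E[B u * B v] = min u v - u * v`. -/
def IsBrownianBridge {Ω : Type*} [MeasurableSpace Ω] (P : Measure Ω)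
    (B : ℝ → Ω → ℝ) : Prop :=
  (∀ y, Measurable (B y)) ∧
    (∀ᵐ ω ∂P, ContinuousOn (fun y => B y ω) (Set.Icc 0 1)) ∧
    (∀ (m : ℕ) (c : Fin m → ℝ) (y : Fin m → ℝ), (∀ i, y i ∈ Set.Icc (0 : ℝ) 1) →
      ∃ v : NNReal, Measure.map (fun ω => ∑ i, c i * B (y i) ω) P = gaussianReal 0 v) ∧
    (∀ u ∈ Set.Icc (0 : ℝ) 1, ∫ ω, B u ω ∂P = 0) ∧
    (∀ u ∈ Set.Icc (0 : ℝ) 1, ∀ v ∈ Set.Icc (0 : ℝ) 1,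
      ∫ ω, B u ω * B v ω ∂P = min u v - u * v)

variable {Ω : Type*} [MeasurableSpace Ω]

/-- The empirical distribution function `F_n(t)` of `X_1, …, X_n`. -/
def empDF (X : ℕ → Ω → ℝ) (n : ℕ) (t : ℝ) (ω : Ω) : ℝ :=
  (n : ℝ)⁻¹ * ∑ i ∈ Finset.range n, if X i ω ≤ t then 1 else 0

/-- The weighted (generalized) bootstrapped empirical distribution function
`F_n*(t) = Σ_{i<n} (Z_i / T_n) 1{X_i ≤ t}`. -/
def bootDF (X Z : ℕ → Ω → ℝ) (n : ℕ) (t : ℝ) (ω : Ω) : ℝ :=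
  ∑ i ∈ Finset.range n,
    (Z i ω / ∑ j ∈ Finset.range n, Z j ω) * (if X i ω ≤ t then 1 else 0)

/-- The weighted bootstrapped empirical process `α_n*(t) = √n (F_n*(t) − F_n(t))`. -/
def bootProc (X Z : ℕ → Ω → ℝ) (n : ℕ) (t : ℝ) (ω : Ω) : ℝ :=
  Real.sqrt n * (bootDF X Z n t ω - empDF X n t ω)

/-- the Brownian bridges furnished by the KMT-type approximation theorem
approximate the weighted bootstrapped empirical process at rate `O_P(log n / √n)`. -/
theorem weighted_bootstrap_KMT_rate_OP
    (P : Measure Ω) [IsProbabilityMeasure P]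
    (X Z : ℕ → Ω → ℝ)
    (hXiid : IsIIDSeq P X)
    (hZiid : IsIIDSeq P Z)
    (hXZindep : IndepFun (fun ω => fun i : ℕ => X i ω) (fun ω => fun i : ℕ => Z i ω) P)
    (hZpos : ∀ i, ∀ᵐ ω ∂P, 0 < Z i ω)
    (hZmean : ∫ ω, Z 0 ω ∂P = 1)
    (hZvar : ∫ ω, (Z 0 ω) ^ 2 ∂P = 2)
    (hZmgf : ∃ ε₀ > (0 : ℝ), ∀ t : ℝ, |t| ≤ ε₀ →
      Integrable (fun ω => Real.exp (t * Z 0 ω)) P)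
    (F : ℝ → ℝ) (hF : ∀ t, F t = (P {ω | X 0 ω ≤ t}).toReal)
    (B : ℕ → ℝ → Ω → ℝ)
    (hB : ∀ n, IsBrownianBridge P (B n))
    -- `B` is furnished by the KMT-type approximation theorem:
    (hKMT : ∃ K₁ > (0 : ℝ), ∃ K₂ > (0 : ℝ), ∃ K₃ > (0 : ℝ),
      ∀ ε > (0 : ℝ), ∀ η > (0 : ℝ), ∃ N : ℕ, ∀ n ≥ N, ∀ x : ℝ, 0 < x →
        P {ω | (⨆ t : ℝ, |bootProc X Z n t ω - B n (F t) ω|) >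
              3 * (K₁ * Real.log n + x) / Real.sqrt n}
          ≤ ENNReal.ofReal (K₂ * Real.exp (-K₃ * x / (1 + ε) ^ 2) + η)) :
    ∀ δ > (0 : ℝ), ∃ C : ℝ, ∃ N : ℕ, ∀ n ≥ N,
      P {ω | (⨆ t : ℝ, |bootProc X Z n t ω - B n (F t) ω|) >
            C * (Real.log n / Real.sqrt n)}
        ≤ ENNReal.ofReal δ := by
  intro δ hδ
  obtain ⟨K₁, hK₁, K₂, hK₂, K₃, hK₃, hmain⟩ := hKMT
  obtain ⟨N₀, hN₀⟩ := hmain 1 one_pos (δ/2) (by linarith)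
  set c : ℝ := K₃ * K₁ / 4 with hc_def
  have hc : 0 < c := by positivity
  have hlog : Filter.Tendsto (fun n : ℕ => Real.log n) Filter.atTop Filter.atTop :=
    Real.tendsto_log_atTop.comp tendsto_natCast_atTop_atTop
  have h1 : Filter.Tendsto (fun n : ℕ => Real.exp (-c * Real.log n)) Filter.atTop (nhds 0) :=
    Real.tendsto_exp_atBot.comp ((Filter.tendsto_neg_atBot_iff.mpr
      (hlog.const_mul_atTop hc)).congr (by intro n; ring))
  have h2 : ∀ᶠ n : ℕ in Filter.atTop, Real.exp (-c * Real.log n) < δ / (2 * K₂) := by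
    have : (0:ℝ) < δ / (2 * K₂) := by positivity
    exact h1.eventually (Filter.Tendsto.eventually_lt_const this Filter.tendsto_id) |>.mono
      (fun n h => h)
  obtain ⟨N₁, hN₁⟩ := Filter.eventually_atTop.mp h2
  refine ⟨6 * K₁, max N₀ (max N₁ 2), fun n hn => ?_⟩
  have hn₀ : n ≥ N₀ := le_trans (le_max_left _ _) hn
  have hn₁ : n ≥ N₁ := le_trans (le_trans (le_max_left _ _) (le_max_right _ _)) hn
  have hn₂ : (2:ℕ) ≤ n := le_trans (le_trans (le_max_right _ _) (le_max_right _ _)) hn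
  have hlogn : 0 < Real.log n := by
    apply Real.log_pos
    exact_mod_cast Nat.lt_of_lt_of_le one_lt_two hn₂
  have hx : 0 < K₁ * Real.log n := by positivity
  have key := hN₀ n hn₀ (K₁ * Real.log n) hx
  have heq : 6 * K₁ * (Real.log n / Real.sqrt n)
      = 3 * (K₁ * Real.log n + K₁ * Real.log n) / Real.sqrt n := by ring
  rw [heq]
  refine le_trans key ?_
  apply ENNReal.ofReal_le_ofReal
  have hexp : K₂ * Real.exp (-K₃ * (K₁ * Real.log n) / (1 + 1) ^ 2) ≤ δ / 2 := by
    have h3 : -K₃ * (K₁ * Real.log n) / (1 + 1) ^ 2 = -c * Real.log n := by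
      rw [hc_def]; ring
    rw [h3]
    have := hN₁ n hn₁
    calc K₂ * Real.exp (-c * Real.log n) ≤ K₂ * (δ / (2 * K₂)) := by
          exact mul_le_mul_of_nonneg_left this.le hK₂.le
      _ = δ / 2 := by field_simp
  linarith
end
end

section
/- Let Z_1, Z_2, … be i.i.d. copies of a strictly positive random variable Z with E[Z] = 1, Var(Z) = 1, and E[e^{tZ}] < ∞ for |t| ≤ ε₀ for some ε₀ > 0, and set T_n = Z_1 + … + Z_n. Fix a constant C > 0. Then there exist positive constants c₂ and c₃ (depending only on the law of Z) such that for every ε > 0 and η > 0 there exists N = N(ε, η) with: for all n ≥ N and all x with 0 < x ≤ C n, P( |n/T_n − 1| > (x/n)^{1/2} ) ≤ c₂ exp( −c₃ x / (1+ε)² ) + η. -/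
open MeasureTheory ProbabilityTheory Real

noncomputable section

set_option maxHeartbeats 1000000


/-- Pointwise second-order bound for exp. -/
lemma exp_le_quadratic (u : ℝ) : Real.exp u ≤ 1 + u + u ^ 2 * Real.exp |u| := by
  rcases le_or_gt |u| 1 with h | h
  · have hb := Real.exp_bound h (n := 2) (by norm_num)
    have h1 : Real.exp u - (1 + u) ≤ |u| ^ 2 * (3 / (2 * 2)) := by
      have : (∑ m ∈ Finset.range 2, u ^ m / m.factorial) = 1 + u := by
        simp [Finset.sum_range_succ]
      rw [this] at hb
      have := (abs_sub_le_iff.1 hb).1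
      simpa [Nat.factorial] using this
    have h2 : (1:ℝ) ≤ Real.exp |u| := Real.one_le_exp (abs_nonneg u)
    have : |u| ^ 2 = u ^ 2 := sq_abs u
    nlinarith [sq_nonneg u]
  · rcases le_or_gt 0 u with hu | hu
    · have habs : |u| = u := abs_of_nonneg hu
      have h1 : (1:ℝ) ≤ u ^ 2 := by nlinarith [abs_of_nonneg hu ▸ h]
      have h2 : (0:ℝ) < Real.exp u := Real.exp_pos u
      have : Real.exp u ≤ u ^ 2 * Real.exp |u| := by
        rw [habs]; nlinarith
      nlinarith
    · have habs : |u| = -u := abs_of_neg hu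
      have h1 : (1:ℝ) < -u := by rwa [habs] at h
      have h2 : Real.exp u ≤ 1 := Real.exp_le_one_iff.mpr hu.le
      have h3 : (2:ℝ) ≤ Real.exp |u| := by
        have := Real.add_one_le_exp |u|
        nlinarith
      nlinarith [sq_nonneg u, sq_nonneg (1 + u)]


lemma mgf_eq_of_map_eq {Ω : Type*} [MeasurableSpace Ω] {P : Measure Ω}
    {X Y : Ω → ℝ} (hX : Measurable X) (hY : Measurable Y)
    (h : Measure.map X P = Measure.map Y P) (t : ℝ) :
    mgf X P t = mgf Y P t := by
  have hm : Measurable fun x : ℝ => Real.exp (t * x) :=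
    (measurable_const_mul t).exp
  unfold mgf
  rw [show (∫ ω, Real.exp (t * X ω) ∂P) = ∫ x, Real.exp (t * x) ∂(Measure.map X P) from
      (integral_map hX.aemeasurable hm.aestronglyMeasurable).symm,
    show (∫ ω, Real.exp (t * Y ω) ∂P) = ∫ x, Real.exp (t * x) ∂(Measure.map Y P) from
      (integral_map hY.aemeasurable hm.aestronglyMeasurable).symm, h]

lemma integrable_exp_of_map_eq {Ω : Type*} [MeasurableSpace Ω] {P : Measure Ω}
    {X Y : Ω → ℝ} (hX : Measurable X) (hY : Measurable Y)
    (h : Measure.map X P = Measure.map Y P) (t : ℝ)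
    (hint : Integrable (fun ω => Real.exp (t * Y ω)) P) :
    Integrable (fun ω => Real.exp (t * X ω)) P := by
  have hm : Measurable fun x : ℝ => Real.exp (t * x) :=
    (measurable_const_mul t).exp
  have h1 : Integrable (fun x : ℝ => Real.exp (t * x)) (Measure.map Y P) := by
    rwa [integrable_map_measure hm.aestronglyMeasurable hY.aemeasurable]
  rw [← h] at h1
  rwa [integrable_map_measure hm.aestronglyMeasurable hX.aemeasurable] at h1

lemma mgf_bound {Ω : Type*} [MeasurableSpace Ω] (P : Measure Ω) [IsProbabilityMeasure P]
    {X : Ω → ℝ} (hXm : Measurable X) (hXpos : ∀ᵐ ω ∂P, 0 < X ω)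
    (hXmean : ∫ ω, X ω ∂P = 1)
    {ε₀ : ℝ} (hε₀ : 0 < ε₀)
    (hint : ∀ t : ℝ, |t| ≤ ε₀ → Integrable (fun ω => Real.exp (t * X ω)) P) :
    ∃ K : ℝ, 1 ≤ K ∧ ∀ t : ℝ, |t| ≤ ε₀ / 2 →
      mgf X P t ≤ Real.exp (t + K * t ^ 2) := by
  -- integrability facts
  have hX : Integrable X P := by
    by_contra h
    rw [integral_undef h] at hXmean
    norm_num at hXmean
  have hE : Integrable (fun ω => Real.exp (ε₀ * X ω)) P := hint ε₀ (by rw [abs_of_pos hε₀])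
  set M : ℝ := ∫ ω, Real.exp (ε₀ * X ω) ∂P with hM
  set K : ℝ := max 1 ((8 / ε₀ ^ 2) * M) with hK
  refine ⟨K, le_max_left _ _, fun t ht => ?_⟩
  -- pointwise bound: for X ω > 0 a.e.
  have hpt : ∀ᵐ ω ∂P, Real.exp (t * X ω) ≤
      1 + t * X ω + ((8 / ε₀ ^ 2) * t ^ 2) * Real.exp (ε₀ * X ω) := by
    filter_upwards [hXpos] with ω hω
    have h1 := exp_le_quadratic (t * X ω)
    have habs : |t * X ω| ≤ (ε₀ / 2) * X ω := by
      rw [abs_mul, abs_of_pos hω]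
      exact mul_le_mul_of_nonneg_right ht hω.le
    have h2 : Real.exp |t * X ω| ≤ Real.exp ((ε₀ / 2) * X ω) := Real.exp_le_exp.2 habs
    -- (X ω)^2 ≤ (8/ε₀²) exp((ε₀/2) X ω)
    have h3 : (X ω) ^ 2 ≤ (8 / ε₀ ^ 2) * Real.exp ((ε₀ / 2) * X ω) := by
      have hq := Real.quadratic_le_exp_of_nonneg
        (x := (ε₀ / 2) * X ω) (by positivity)
      have hε2 : (0:ℝ) < ε₀ ^ 2 := by positivity
      rw [div_mul_eq_mul_div, le_div_iff₀ hε2]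
      nlinarith [hq, mul_pos (half_pos hε₀) hω]
    have h4 : Real.exp ((ε₀ / 2) * X ω) * Real.exp ((ε₀ / 2) * X ω)
        = Real.exp (ε₀ * X ω) := by
      rw [← Real.exp_add]; ring_nf
    have h5 : (t * X ω) ^ 2 * Real.exp |t * X ω| ≤
        ((8 / ε₀ ^ 2) * t ^ 2) * Real.exp (ε₀ * X ω) := by
      rw [← h4]
      calc (t * X ω) ^ 2 * Real.exp |t * X ω|
          ≤ (t ^ 2 * ((8 / ε₀ ^ 2) * Real.exp ((ε₀ / 2) * X ω))) *
            Real.exp ((ε₀ / 2) * X ω) := by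
            have := (Real.exp_pos |t * X ω|).le
            have e1 : (t * X ω) ^ 2 = t ^ 2 * (X ω) ^ 2 := by ring
            have e2 : (0:ℝ) < Real.exp ((ε₀/2) * X ω) := Real.exp_pos _
            nlinarith [sq_nonneg t, sq_nonneg (X ω), Real.exp_pos |t * X ω|,
              mul_le_mul_of_nonneg_left h3 (sq_nonneg t)]
        _ = ((8 / ε₀ ^ 2) * t ^ 2) * (Real.exp ((ε₀/2) * X ω) * Real.exp ((ε₀/2) * X ω)) := by
            ring
    linarith
  -- integrate
  have hRHSint : Integrable
      (fun ω => 1 + t * X ω + ((8 / ε₀ ^ 2) * t ^ 2) * Real.exp (ε₀ * X ω)) P :=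
    ((integrable_const 1).add (hX.const_mul t)).add (hE.const_mul _)
  have hLint : Integrable (fun ω => Real.exp (t * X ω)) P :=
    hint t (le_trans ht (by linarith))
  have hI : mgf X P t ≤
      ∫ ω, (1 + t * X ω + ((8 / ε₀ ^ 2) * t ^ 2) * Real.exp (ε₀ * X ω)) ∂P :=
    integral_mono_ae hLint hRHSint hpt
  have hIval : ∫ ω, (1 + t * X ω + ((8 / ε₀ ^ 2) * t ^ 2) * Real.exp (ε₀ * X ω)) ∂P
      = 1 + t + ((8 / ε₀ ^ 2) * t ^ 2) * M := by
    rw [integral_add (by exact (integrable_const 1).add (hX.const_mul t) :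
        Integrable (fun ω => 1 + t * X ω) P) (hE.const_mul _),
      integral_add (integrable_const (1:ℝ)) (hX.const_mul t),
      integral_const, integral_const_mul, integral_const_mul, hXmean]
    simp [hM]
  rw [hIval] at hI
  have hM0 : 0 ≤ M := integral_nonneg fun ω => (Real.exp_pos _).le
  have h6 : 1 + t + ((8 / ε₀ ^ 2) * t ^ 2) * M ≤ 1 + (t + K * t ^ 2) := by
    have : ((8 / ε₀ ^ 2) * t ^ 2) * M ≤ K * t ^ 2 := by
      have : (8 / ε₀ ^ 2) * M ≤ K := le_max_right _ _
      nlinarith [sq_nonneg t]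
    linarith
  calc mgf X P t ≤ 1 + (t + K * t ^ 2) := by linarith
    _ ≤ Real.exp (t + K * t ^ 2) := by linarith [Real.add_one_le_exp (t + K * t ^ 2)]

lemma chernoff_tails {Ω : Type*} [MeasurableSpace Ω] (P : Measure Ω) [IsProbabilityMeasure P]
    (Z : ℕ → Ω → ℝ) (hmeas : ∀ i, Measurable (Z i))
    (hindep : iIndepFun Z P)
    (hlaw : ∀ i, Measure.map (Z i) P = Measure.map (Z 0) P)
    {K t : ℝ} (ht : 0 ≤ t)
    (hbp : mgf (Z 0) P t ≤ Real.exp (t + K * t ^ 2))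
    (hbm : mgf (Z 0) P (-t) ≤ Real.exp (-t + K * t ^ 2))
    (hip : Integrable (fun ω => Real.exp (t * Z 0 ω)) P)
    (him : Integrable (fun ω => Real.exp (-t * Z 0 ω)) P)
    (n : ℕ) (a : ℝ) :
    (P {ω | (n : ℝ) + a ≤ (∑ i ∈ Finset.range n, Z i) ω}).toReal ≤
        Real.exp (-(t * a) + n * (K * t ^ 2)) ∧
    (P {ω | (∑ i ∈ Finset.range n, Z i) ω ≤ (n : ℝ) - a}).toReal ≤
        Real.exp (-(t * a) + n * (K * t ^ 2)) := by
  have hmgfS : ∀ s : ℝ, mgf (∑ i ∈ Finset.range n, Z i) P s = (mgf (Z 0) P s) ^ n := by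
    intro s
    rw [hindep.mgf_sum hmeas,
      Finset.prod_congr rfl (fun i _ => mgf_eq_of_map_eq (hmeas i) (hmeas 0) (hlaw i) s),
      Finset.prod_const, Finset.card_range]
  constructor
  · have hSint : Integrable (fun ω => Real.exp (t * (∑ i ∈ Finset.range n, Z i) ω)) P :=
      hindep.integrable_exp_mul_sum hmeas
        (fun i _ => integrable_exp_of_map_eq (hmeas i) (hmeas 0) (hlaw i) t hip)
    have h := measure_ge_le_exp_mul_mgf (X := ∑ i ∈ Finset.range n, Z i) (μ := P)
      ((n : ℝ) + a) ht hSint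
    refine h.trans ?_
    rw [hmgfS]
    calc Real.exp (-t * ((n : ℝ) + a)) * (mgf (Z 0) P t) ^ n
        ≤ Real.exp (-t * ((n : ℝ) + a)) * (Real.exp (t + K * t ^ 2)) ^ n := by
          gcongr
          exact mgf_nonneg
      _ = Real.exp (-(t * a) + n * (K * t ^ 2)) := by
          rw [← Real.exp_nat_mul, ← Real.exp_add]
          ring_nf
  · have hSint : Integrable (fun ω => Real.exp (-t * (∑ i ∈ Finset.range n, Z i) ω)) P :=
      hindep.integrable_exp_mul_sum hmeas
        (fun i _ => integrable_exp_of_map_eq (hmeas i) (hmeas 0) (hlaw i) (-t) him)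
    have h := measure_le_le_exp_mul_mgf (X := ∑ i ∈ Finset.range n, Z i) (μ := P)
      ((n : ℝ) - a) (neg_nonpos.mpr ht) hSint
    refine h.trans ?_
    rw [hmgfS]
    calc Real.exp (-(-t) * ((n : ℝ) - a)) * (mgf (Z 0) P (-t)) ^ n
        ≤ Real.exp (-(-t) * ((n : ℝ) - a)) * (Real.exp (-t + K * t ^ 2)) ^ n := by
          gcongr
          exact mgf_nonneg
      _ = Real.exp (-(t * a) + n * (K * t ^ 2)) := by
          rw [← Real.exp_nat_mul, ← Real.exp_add]
          ring_nf

/-- exponential bound for deviations of `n/T_n` from 1, for `0 < x ≤ C n`. -/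
theorem weighted_bootstrap_n_over_Tn_deviation
    {Ω : Type*} [MeasurableSpace Ω] (P : Measure Ω) [IsProbabilityMeasure P]
    (Z : ℕ → Ω → ℝ)
    (hZiid : IsIIDSeq P Z)
    (hZpos : ∀ i, ∀ᵐ ω ∂P, 0 < Z i ω)
    (hZmean : ∫ ω, Z 0 ω ∂P = 1)
    (hZvar : ∫ ω, (Z 0 ω) ^ 2 ∂P = 2)
    (hZmgf : ∃ ε₀ > (0 : ℝ), ∀ t : ℝ, |t| ≤ ε₀ →
      Integrable (fun ω => Real.exp (t * Z 0 ω)) P)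
    (C : ℝ) (hC : 0 < C) :
    ∃ c₂ > (0 : ℝ), ∃ c₃ > (0 : ℝ), ∀ ε > (0 : ℝ), ∀ η > (0 : ℝ), ∃ N : ℕ,
      ∀ n ≥ N, ∀ x : ℝ, 0 < x → x ≤ C * n →
        P {ω | |(n : ℝ) / (∑ i ∈ Finset.range n, Z i ω) - 1| > Real.sqrt (x / n)}
          ≤ ENNReal.ofReal (c₂ * Real.exp (-c₃ * x / (1 + ε) ^ 2) + η) := by
  obtain ⟨hmeas, hindep, hlaw⟩ := hZiid
  obtain ⟨ε₀, hε₀, hint⟩ := hZmgf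
  obtain ⟨K, hK1, hKb⟩ := mgf_bound P (hmeas 0) (hZpos 0) hZmean hε₀ hint
  have hK0 : (0 : ℝ) < K := lt_of_lt_of_le one_pos hK1
  have hsC : (0 : ℝ) < Real.sqrt C := Real.sqrt_pos.2 hC
  obtain ⟨D, hD⟩ : ∃ D : ℝ, D = 1 + Real.sqrt C := ⟨_, rfl⟩
  have hD0 : (0 : ℝ) < D := by rw [hD]; positivity
  have hD1 : (1 : ℝ) ≤ D := by rw [hD]; linarith [Real.sqrt_nonneg C]
  obtain ⟨c₃, hc₃⟩ : ∃ c₃ : ℝ,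
      c₃ = min (1 / (4 * K * D ^ 2)) (ε₀ / (4 * Real.sqrt C * D)) := ⟨_, rfl⟩
  have hc₃0 : 0 < c₃ := hc₃ ▸ lt_min (by positivity) (by positivity)
  refine ⟨2, by norm_num, c₃, hc₃0, fun ε hε η hη => ⟨1, fun n hn x hx hxC => ?_⟩⟩
  have hn0 : 0 < n := hn
  have hn1 : (1 : ℝ) ≤ (n : ℝ) := by exact_mod_cast hn
  have hnR : (0 : ℝ) < (n : ℝ) := by linarith
  obtain ⟨δ, hδ⟩ : ∃ δ : ℝ, δ = Real.sqrt (x / n) := ⟨_, rfl⟩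
  have hxn : 0 < x / n := div_pos hx hnR
  have hδ0 : 0 < δ := hδ ▸ Real.sqrt_pos.2 hxn
  have hδsq : δ ^ 2 = x / n := by rw [hδ]; exact Real.sq_sqrt hxn.le
  have hδC : δ ≤ Real.sqrt C := by
    rw [hδ]
    apply Real.sqrt_le_sqrt
    rw [div_le_iff₀ hnR]
    linarith [hxC]
  obtain ⟨a, ha⟩ : ∃ a : ℝ, a = (n : ℝ) * δ / D := ⟨_, rfl⟩
  have ha0 : 0 < a := by rw [ha]; positivity
  obtain ⟨t, htdef⟩ : ∃ t : ℝ, t = min (a / (2 * K * n)) (ε₀ / 2) := ⟨_, rfl⟩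
  have ht0 : 0 < t := htdef ▸ lt_min (by positivity) (by positivity)
  have htε : t ≤ ε₀ / 2 := htdef ▸ min_le_right _ _
  have habs : |t| ≤ ε₀ / 2 := by rw [abs_of_pos ht0]; exact htε
  have habs' : |(-t)| ≤ ε₀ / 2 := by rwa [abs_neg]
  have hbp := hKb t habs
  have hbm := hKb (-t) habs'
  have hbm' : mgf (Z 0) P (-t) ≤ Real.exp (-t + K * t ^ 2) := by
    simpa [neg_sq] using hbm
  have hip : Integrable (fun ω => Real.exp (t * Z 0 ω)) P :=
    hint t (by rw [abs_of_pos ht0]; linarith)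
  have him : Integrable (fun ω => Real.exp (-t * Z 0 ω)) P :=
    hint (-t) (by rw [abs_neg, abs_of_pos ht0]; linarith)
  obtain ⟨hup, hlow⟩ := chernoff_tails P Z hmeas hindep hlaw ht0.le hbp hbm' hip him n a
  -- exponent bound
  have hexp : -(t * a) + (n : ℝ) * (K * t ^ 2) ≤ -(c₃ * x) := by
    have h1 : (n : ℝ) * (K * t ^ 2) ≤ t * a / 2 := by
      have htu : t ≤ a / (2 * K * n) := htdef ▸ min_le_left _ _
      rw [le_div_iff₀ (by positivity : (0:ℝ) < 2 * K * (n:ℝ))] at htu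
      linarith only [mul_le_mul_of_nonneg_right htu ht0.le]
    have h2 : c₃ * x ≤ t * a / 2 := by
      have haa : a * a = (n : ℝ) * x / D ^ 2 := by
        have e1 : a * a = (n : ℝ) ^ 2 * δ ^ 2 / D ^ 2 := by rw [ha]; ring
        rw [e1, hδsq]
        field_simp
      have case1 : c₃ * x ≤ (a / (2 * K * n)) * a / 2 := by
        have e2 : (a / (2 * K * n)) * a / 2 = a * a / (4 * K * n) := by ring
        have e3 : a * a / (4 * K * n) = x / (4 * K * D ^ 2) := by
          rw [haa]
          field_simp
        rw [e2, e3]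
        have hc : c₃ ≤ 1 / (4 * K * D ^ 2) := hc₃ ▸ min_le_left _ _
        calc c₃ * x ≤ (1 / (4 * K * D ^ 2)) * x :=
              mul_le_mul_of_nonneg_right hc hx.le
          _ = x / (4 * K * D ^ 2) := by ring
      have case2 : c₃ * x ≤ (ε₀ / 2) * a / 2 := by
        have hna : x / Real.sqrt C ≤ (n : ℝ) * δ := by
          have h5 : (n : ℝ) * δ = Real.sqrt ((n : ℝ) * x) := by
            rw [hδ, ← Real.sqrt_sq hnR.le, ← Real.sqrt_mul (sq_nonneg _)]
            congr 1
            field_simp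
            rw [Real.sq_sqrt (sq_nonneg _)]
          have h6 : x / Real.sqrt C = Real.sqrt (x ^ 2 / C) := by
            rw [Real.sqrt_div (sq_nonneg x), Real.sqrt_sq hx.le]
          rw [h5, h6]
          apply Real.sqrt_le_sqrt
          rw [div_le_iff₀ hC]
          linarith only [mul_le_mul_of_nonneg_right hxC hx.le]
        have e4 : (ε₀ / 2) * a / 2 = ε₀ * ((n : ℝ) * δ) / (4 * D) := by
          rw [ha]; field_simp; ring
        rw [e4]
        have hc : c₃ ≤ ε₀ / (4 * Real.sqrt C * D) := hc₃ ▸ min_le_right _ _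
        have h7 : ε₀ * (x / Real.sqrt C) / (4 * D) ≤ ε₀ * ((n : ℝ) * δ) / (4 * D) := by
          gcongr
        refine le_trans ?_ h7
        have e5 : ε₀ * (x / Real.sqrt C) / (4 * D) = (ε₀ / (4 * Real.sqrt C * D)) * x := by
          field_simp
        rw [e5]
        exact mul_le_mul_of_nonneg_right hc hx.le
      rcases min_cases (a / (2 * K * n)) (ε₀ / 2) with ⟨heq, _⟩ | ⟨heq, _⟩
      · rw [htdef, heq]; exact case1
      · rw [htdef, heq]; exact case2
    linarith only [h1, h2]
  obtain ⟨B, hB⟩ : ∃ B : ℝ, B = Real.exp (-(t * a) + (n : ℝ) * (K * t ^ 2)) := ⟨_, rfl⟩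
  have hB0 : 0 ≤ B := hB ▸ (Real.exp_pos _).le
  rw [← hB] at hup hlow
  -- set inclusion
  have hSpos : ∀ᵐ ω ∂P, 0 < (∑ i ∈ Finset.range n, Z i) ω := by
    filter_upwards [MeasureTheory.ae_all_iff.2 hZpos] with ω hω
    rw [Finset.sum_apply]
    exact Finset.sum_pos (fun i _ => hω i) (Finset.nonempty_range_iff.2 hn0.ne')
  have hincl : {ω | |(n : ℝ) / (∑ i ∈ Finset.range n, Z i ω) - 1| > Real.sqrt (x / n)} ≤ᵐ[P]
      (({ω | (∑ i ∈ Finset.range n, Z i) ω ≤ (n : ℝ) - a} ∪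
        {ω | (n : ℝ) + a ≤ (∑ i ∈ Finset.range n, Z i) ω} : Set Ω)) := by
    filter_upwards [hSpos] with ω hSω hmem
    have hmem' : Real.sqrt (x / n) < |(n : ℝ) / (∑ i ∈ Finset.range n, Z i) ω - 1| := by
      rw [Finset.sum_apply]; exact hmem
    rw [← hδ] at hmem'
    show ω ∈ ({ω | (∑ i ∈ Finset.range n, Z i) ω ≤ (n : ℝ) - a} ∪
        {ω | (n : ℝ) + a ≤ (∑ i ∈ Finset.range n, Z i) ω} : Set Ω)
    rcases lt_abs.mp hmem' with h | h
    · -- n/S - 1 > δ : lower tail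
      left
      have h1 : (1 + δ) * (∑ i ∈ Finset.range n, Z i) ω < n := by
        rw [← lt_div_iff₀ hSω]
        linarith only [h]
      have h2 : a ≤ (n : ℝ) * δ / (1 + δ) := by
        rw [ha, div_le_div_iff₀ hD0 (by positivity : (0:ℝ) < 1 + δ)]
        have hDδ : 1 + δ ≤ D := by rw [hD]; linarith only [hδC]
        exact mul_le_mul_of_nonneg_left hDδ (mul_nonneg hnR.le hδ0.le)
      have h3 : (n : ℝ) / (1 + δ) = (n : ℝ) - (n : ℝ) * δ / (1 + δ) := by
        field_simp
        ring
      have h4 : (∑ i ∈ Finset.range n, Z i) ω < (n : ℝ) / (1 + δ) := by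
        rw [lt_div_iff₀ (by positivity : (0:ℝ) < 1 + δ)]
        linarith only [h1]
      simp only [Set.mem_setOf_eq]
      linarith only [h2, h3, h4]
    · -- n/S - 1 < -δ : upper tail
      right
      have hr : (n : ℝ) / (∑ i ∈ Finset.range n, Z i) ω < 1 - δ := by linarith only [h]
      have hrpos : 0 < (n : ℝ) / (∑ i ∈ Finset.range n, Z i) ω := by positivity
      have hδ1 : δ < 1 := by linarith only [hr, hrpos]
      have h1 : (n : ℝ) < (1 - δ) * (∑ i ∈ Finset.range n, Z i) ω := by
        rw [div_lt_iff₀ hSω] at hr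
        linarith only [hr]
      have h1' : (1 - δ) * (∑ i ∈ Finset.range n, Z i) ω =
          (∑ i ∈ Finset.range n, Z i) ω - δ * (∑ i ∈ Finset.range n, Z i) ω := by ring
      have hSn : (n : ℝ) < (∑ i ∈ Finset.range n, Z i) ω := by
        linarith only [h1, h1', mul_nonneg hδ0.le hSω.le]
      have h5 : δ * (n : ℝ) < δ * (∑ i ∈ Finset.range n, Z i) ω :=
        mul_lt_mul_of_pos_left hSn hδ0
      have h2 : a ≤ δ * (n : ℝ) := by
        rw [ha, div_le_iff₀ hD0]
        linarith only [mul_le_mul_of_nonneg_left hD1 (mul_nonneg hδ0.le hnR.le)]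
      simp only [Set.mem_setOf_eq]
      linarith only [h1, h1', h5, h2]
  -- measure bound
  have hmeasle :
      P {ω | |(n : ℝ) / (∑ i ∈ Finset.range n, Z i ω) - 1| > Real.sqrt (x / n)} ≤
      P {ω | (∑ i ∈ Finset.range n, Z i) ω ≤ (n : ℝ) - a} +
        P {ω | (n : ℝ) + a ≤ (∑ i ∈ Finset.range n, Z i) ω} :=
    (measure_mono_ae hincl).trans (measure_union_le _ _)
  have hb1 : P {ω | (∑ i ∈ Finset.range n, Z i) ω ≤ (n : ℝ) - a} ≤ ENNReal.ofReal B := by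
    rw [← ENNReal.ofReal_toReal (measure_ne_top P _)]
    exact ENNReal.ofReal_le_ofReal hlow
  have hb2 : P {ω | (n : ℝ) + a ≤ (∑ i ∈ Finset.range n, Z i) ω} ≤ ENNReal.ofReal B := by
    rw [← ENNReal.ofReal_toReal (measure_ne_top P _)]
    exact ENNReal.ofReal_le_ofReal hup
  have hfin : B + B ≤ 2 * Real.exp (-c₃ * x / (1 + ε) ^ 2) + η := by
    have hBle : B ≤ Real.exp (-c₃ * x / (1 + ε) ^ 2) := by
      rw [hB]
      apply Real.exp_le_exp.2
      refine hexp.trans ?_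
      rw [neg_mul, neg_div, neg_le_neg_iff]
      rw [div_le_iff₀ (by positivity : (0:ℝ) < (1 + ε)^2)]
      linarith only [mul_nonneg (mul_nonneg hc₃0.le hx.le) hε.le,
        mul_nonneg (mul_nonneg hc₃0.le hx.le) (sq_nonneg ε)]
    linarith only [hBle, hη]
  calc P {ω | |(n : ℝ) / (∑ i ∈ Finset.range n, Z i ω) - 1| > Real.sqrt (x / n)}
      ≤ ENNReal.ofReal B + ENNReal.ofReal B := hmeasle.trans (add_le_add hb1 hb2)
    _ = ENNReal.ofReal (B + B) := (ENNReal.ofReal_add hB0 hB0).symm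
    _ ≤ ENNReal.ofReal (2 * Real.exp (-c₃ * x / (1 + ε) ^ 2) + η) :=
        ENNReal.ofReal_le_ofReal hfin
end
end
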